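/- Let r ≥ 2 and let φ ∈ Σ_r ⊗ Δ_n be a partially pure spinor. Extend the endomorphisms η̂_{kl}^φ to all indices by η̂_{lk}^φ = −η̂_{kl}^φ and η̂_{kk}^φ = 0. Then they satisfy the commutation relations of so(r): [η̂_{kl}^φ, η̂_{ij}^φ] = 0 whenever i, j, k, l ∈ {1,…,r} are pairwise distinct, and [η̂_{ij}^φ, η̂_{jk}^φ] = −η̂_{ik}^φ whenever i, j, k ∈ {1,…,r} are pairwise distinct. -/

import Mathlib

open Complex Matrix
noncomputable section
abbrev Rn (n : ℕ) := EuclideanSpace ℝ (Fin n)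
abbrev SpIdx (n : ℕ) : Type := Fin (n / 2) → Fin 2
abbrev Spinor (n : ℕ) := EuclideanSpace ℂ (SpIdx n)
abbrev TwSpinor (r n : ℕ) := EuclideanSpace ℂ (SpIdx r × SpIdx n)

def g1M : Matrix (Fin 2) (Fin 2) ℂ := !![I, 0; 0, -I]
def g2M : Matrix (Fin 2) (Fin 2) ℂ := !![0, I; I, 0]
def TM : Matrix (Fin 2) (Fin 2) ℂ := !![0, -I; I, 0]

def tensorOp {k : ℕ} (M : Fin k → Matrix (Fin 2) (Fin 2) ℂ) :
    Matrix (Fin k → Fin 2) (Fin k → Fin 2) ℂ :=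
  Matrix.of fun x y => ∏ t, M t (x t) (y t)

def genMat (n : ℕ) (i : ℕ) : Matrix (SpIdx n) (SpIdx n) ℂ :=
  if i < 2 * (n / 2) then
    tensorOp (fun t =>
      if (t : ℕ) < n / 2 - 1 - i / 2 then 1
      else if (t : ℕ) = n / 2 - 1 - i / 2 then (if i % 2 = 0 then g1M else g2M)
      else TM)
  else I • tensorOp (fun _ => TM)

def vecMat (n : ℕ) (X : Rn n) : Matrix (SpIdx n) (SpIdx n) ℂ :=
  ∑ i : Fin n, (X i : ℂ) • genMat n (i : ℕ)

def volMat (n : ℕ) : Matrix (SpIdx n) (SpIdx n) ℂ :=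
  ((List.range n).map (genMat n)).prod

def actN {r n : ℕ} (M : Matrix (SpIdx n) (SpIdx n) ℂ) (φ : TwSpinor r n) : TwSpinor r n :=
  WithLp.toLp 2 (fun p => ∑ b, M p.2 b * φ (p.1, b))

def actR {r n : ℕ} (M : Matrix (SpIdx r) (SpIdx r) ℂ) (φ : TwSpinor r n) : TwSpinor r n :=
  WithLp.toLp 2 (fun p => ∑ a, M p.1 a * φ (a, p.2))

def wedgeMat (n : ℕ) (X Y : Rn n) : Matrix (SpIdx n) (SpIdx n) ℂ :=
  vecMat n X * vecMat n Y + (((inner ℝ X Y : ℝ) : ℂ)) • 1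

def etaM (r n : ℕ) (M : Matrix (SpIdx r) (SpIdx r) ℂ) (φ : TwSpinor r n) (X Y : Rn n) : ℝ :=
  ((inner ℂ (actN (wedgeMat n X Y) (actR M φ)) φ : ℂ)).re

def eta (r n : ℕ) (φ : TwSpinor r n) (k l : ℕ) (X Y : Rn n) : ℝ :=
  etaM r n (genMat r k * genMat r l) φ X Y

def stdBasis (n : ℕ) (i : Fin n) : Rn n := EuclideanSpace.single i 1

def etaActionM (r n : ℕ) (M : Matrix (SpIdx r) (SpIdx r) ℂ) (φ : TwSpinor r n) : TwSpinor r n :=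
  ∑ i : Fin n, ∑ j : Fin n,
    if i < j then
      ((etaM r n M φ (stdBasis n i) (stdBasis n j) : ℝ) : ℂ) • actN (genMat n (i:ℕ) * genMat n (j:ℕ)) φ
    else 0

def InSigma (r n : ℕ) (φ : TwSpinor r n) : Prop :=
  r % 2 = 1 ∨ actR (((-I) ^ (r / 2)) • volMat r) φ = φ

structure IsPartiallyPure (r n : ℕ) (φ : TwSpinor r n) (V : Submodule ℝ (Rn n)) : Prop where
  lt_dim : r < n
  mem_sigma : InSigma r n φ
  unit_norm : ‖φ‖ = 1
  dim_eq : Module.finrank ℝ V = n - r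
  exists_conj : ∀ X ∈ V, ∃ Y ∈ V, actN (vecMat n X) φ = I • actN (vecMat n Y) φ
  eta_plus : ∀ k l : Fin r, k < l →
    etaActionM r n (genMat r (k : ℕ) * genMat r (l : ℕ)) φ
      + actR (genMat r (k : ℕ) * genMat r (l : ℕ)) φ = 0
  f_orth : ∀ k l : Fin r, k < l →
    (inner ℂ (actR (genMat r (k : ℕ) * genMat r (l : ℕ)) φ) φ : ℂ) = 0
  vol_orth : r = 4 → (inner ℂ (actR (volMat r) φ) φ : ℂ) = 0
-- real matrix applied to a Euclidean vector
def mvE {n : ℕ} (M : Matrix (Fin n) (Fin n) ℝ) (x : Rn n) : Rn n := WithLp.toLp 2 (fun i => ∑ j, M i j * x j)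

def etaHatMat (r n : ℕ) (φ : TwSpinor r n) (k l : ℕ) : Matrix (Fin n) (Fin n) ℝ :=
  Matrix.of fun i j => eta r n φ k l (stdBasis n j) (stdBasis n i)

def etaHatExt (r n : ℕ) (φ : TwSpinor r n) (k l : Fin r) : Matrix (Fin n) (Fin n) ℝ :=
  if k = l then 0 else if k < l then etaHatMat r n φ (k : ℕ) (l : ℕ)
  else -(etaHatMat r n φ (l : ℕ) (k : ℕ))

def etaPhi (r n : ℕ) (φ : TwSpinor r n) (C : Matrix (Fin r) (Fin r) ℝ) :
    Matrix (Fin n) (Fin n) ℝ :=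
  ∑ k : Fin r, ∑ l : Fin r, if k < l then C k l • etaHatMat r n φ (k : ℕ) (l : ℕ) else 0

def IsEtaFrame (r n : ℕ) (φ : TwSpinor r n) (V : Submodule ℝ (Rn n)) (v : Fin r → Rn n) : Prop :=
  Orthonormal ℝ v ∧ (∀ k, v k ∈ Vᗮ) ∧
    ∀ k l : Fin r, k < l → ∀ X Y : Rn n,
      eta r n φ (k : ℕ) (l : ℕ) X Y
        = (inner ℝ (v k) X : ℝ) * (inner ℝ (v l) Y : ℝ) - (inner ℝ (v l) X : ℝ) * (inner ℝ (v k) Y : ℝ)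

def IsJ (r n : ℕ) (φ : TwSpinor r n) (V : Submodule ℝ (Rn n)) (J : Rn n → Rn n) : Prop :=
  (∀ X ∈ V, J X ∈ V) ∧ ∀ X ∈ V, actN (vecMat n X) φ = I • actN (vecMat n (J X)) φ

def Fop (r n : ℕ) (φ : TwSpinor r n) : TwSpinor r n :=
  ((-I) ^ (n / 2) * I ^ (r / 2)) • actN (volMat n) (actR (volMat r) φ)

def tripleFrame (m r : ℕ) (v vJ : Fin m → Rn (2*m+r)) (w : Fin r → Rn (2*m+r)) :
    Fin (2*m+r) → Rn (2*m+r) :=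
  fun i => if h : (i : ℕ) < 2*m then
      (if (i : ℕ) % 2 = 0 then v ⟨(i:ℕ)/2, by omega⟩ else vJ ⟨(i:ℕ)/2, by omega⟩)
    else w ⟨(i:ℕ) - 2*m, by have := i.isLt; omega⟩

def frameDet (n : ℕ) (u : Fin n → Rn n) : ℝ := (Matrix.of fun i j => u i j).det

def TripleSign (m r : ℕ) (φ : TwSpinor r (2*m+r)) (V : Submodule ℝ (Rn (2*m+r)))
    (J : Rn (2*m+r) → Rn (2*m+r)) (c : ℝ) : Prop :=
  ∃ (v : Fin m → Rn (2*m+r)) (w : Fin r → Rn (2*m+r)),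
    (∀ j, v j ∈ V) ∧ IsEtaFrame r (2*m+r) φ V w ∧
    Orthonormal ℝ (tripleFrame m r v (fun j => J (v j)) w) ∧
    frameDet (2*m+r) (tripleFrame m r v (fun j => J (v j)) w) = c

def IsCompatTriple (m r : ℕ) (V : Submodule ℝ (Rn (2*m+r)))
    (J : Rn (2*m+r) → Rn (2*m+r)) (w : Fin r → Rn (2*m+r)) : Prop :=
  Module.finrank ℝ V = 2*m ∧ (∀ x ∈ V, J x ∈ V) ∧ (∀ x ∈ V, J (J x) = -x) ∧
  (∀ x ∈ V, ∀ y ∈ V, (inner ℝ (J x) (J y) : ℝ) = (inner ℝ x y : ℝ)) ∧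
  Orthonormal ℝ w ∧ (∀ k, w k ∈ Vᗮ)

def IsPosTriple (m r : ℕ) (V : Submodule ℝ (Rn (2*m+r)))
    (J : Rn (2*m+r) → Rn (2*m+r)) (w : Fin r → Rn (2*m+r)) : Prop :=
  IsCompatTriple m r V J w ∧ ∃ v : Fin m → Rn (2*m+r), (∀ j, v j ∈ V) ∧
    Orthonormal ℝ (tripleFrame m r v (fun j => J (v j)) w) ∧
    frameDet (2*m+r) (tripleFrame m r v (fun j => J (v j)) w) = 1

def SpinMat (n : ℕ) : Set (Matrix (SpIdx n) (SpIdx n) ℂ) :=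
  {M | ∃ L : List (Rn n), L.length % 2 = 0 ∧ (∀ x ∈ L, ‖x‖ = 1) ∧
        M = (L.map (vecMat n)).prod}

def kronOp {r n : ℕ} (h : Matrix (SpIdx r) (SpIdx r) ℂ) (g : Matrix (SpIdx n) (SpIdx n) ℂ) :
    Matrix (SpIdx r × SpIdx n) (SpIdx r × SpIdx n) ℂ :=
  Matrix.of fun p q => h p.1 q.1 * g p.2 q.2

def SpinCR (r n : ℕ) : Set (Matrix (SpIdx r × SpIdx n) (SpIdx r × SpIdx n) ℂ) :=
  {U | ∃ g ∈ SpinMat n, ∃ h ∈ SpinMat r, ∃ z : ℂ, ‖z‖ = 1 ∧ U = z • kronOp h g}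

def SpinCsub (r n : ℕ) : Set (Matrix (SpIdx r × SpIdx n) (SpIdx r × SpIdx n) ℂ) :=
  {U | ∃ h ∈ SpinMat r, ∃ z : ℂ, ‖z‖ = 1 ∧ U = z • kronOp h 1}

def twAct {r n : ℕ} (U : Matrix (SpIdx r × SpIdx n) (SpIdx r × SpIdx n) ℂ)
    (φ : TwSpinor r n) : TwSpinor r n :=
  WithLp.toLp 2 (fun p => ∑ q, U p q * φ q)

def SOset (r : ℕ) : Set (Matrix (Fin r) (Fin r) ℝ) := {B | B * Bᵀ = 1 ∧ B.det = 1}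

def SOg (r : ℕ) : Subgroup (Matrix.orthogonalGroup (Fin r) ℝ) :=
  MonoidHom.ker (Matrix.detMonoidHom.comp (Matrix.orthogonalGroup (Fin r) ℝ).subtype)

def soMat {r : ℕ} (B : ↥(SOg r)) : Matrix (Fin r) (Fin r) ℝ := ((B : Matrix.orthogonalGroup (Fin r) ℝ) : Matrix (Fin r) (Fin r) ℝ)

def toCvec (m r : ℕ) (x : Rn (2*m+r)) : Fin m → ℂ :=
  fun j => (x ⟨2*(j:ℕ), by have := j.isLt; omega⟩ : ℝ) + (x ⟨2*(j:ℕ)+1, by have := j.isLt; omega⟩ : ℝ) * I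

def blockMap (m r : ℕ) (A : Matrix (Fin m) (Fin m) ℂ) (B : Matrix (Fin r) (Fin r) ℝ) :
    Rn (2*m+r) → Rn (2*m+r) :=
  fun x => WithLp.toLp 2 (fun i =>
    if h : (i : ℕ) < 2*m then
      (if (i : ℕ) % 2 = 0 then (A.mulVec (toCvec m r x) ⟨(i:ℕ)/2, by omega⟩).re
       else (A.mulVec (toCvec m r x) ⟨(i:ℕ)/2, by omega⟩).im)
    else ∑ k : Fin r, B ⟨(i:ℕ) - 2*m, by have := i.isLt; omega⟩ k
            * x ⟨2*m + (k:ℕ), by have := k.isLt; omega⟩)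


/-!
Write `P = f_k f_l` (acting on the `Δ_r` factor) and `Ω_P = ∑_{a<b} η_P(e_a, e_b) e_a e_b` for the
Clifford action of the 2-form `η_P(X, Y) = Re ⟨(X ∧ Y) P φ, φ⟩`. The Clifford relations give
`[Ω_P, e_m] = 2 ∑_x η_P(e_m, e_x) e_x`, so the `(a, b)` entry of `2 [η̂_Q, η̂_P]` is
`Re ⟨Q [Ω_P, e_b e_a] φ, φ⟩`. Partial purity says `Ω_P φ = -P φ`; since `Ω_P` and `P` are
skew-adjoint and `P`, `Q` commute with all `e_a`, this becomes `Re ⟨[Q, P] e_b e_a φ, φ⟩`, i.e.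
`2 [η̂_Q, η̂_P] = η̂_{[Q, P]} - Re ⟨[Q, P] φ, φ⟩`. The `so(r)` relations then follow from
`[f_k f_l, f_i f_j] = 0` for disjoint pairs, `[f_i f_j, f_j f_k] = -2 f_i f_k` and
`⟨f_i f_k φ, φ⟩ = 0`.
-/

open scoped Kronecker

structure IsCliffordFamily {ι R : Type*} [Ring R] (e : ι → R) : Prop where
  mul_self : ∀ a, e a * e a = -1
  anticomm : ∀ a b, a ≠ b → e a * e b = -(e b * e a)

namespace IsCliffordFamily

variable {ι R : Type*} [Ring R] {e : ι → R}

theorem map {S : Type*} [Ring S] (he : IsCliffordFamily e) (f : R →+* S) :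
    IsCliffordFamily (f ∘ e) where
  mul_self a := by simp [← map_mul, he.mul_self]
  anticomm a b h := by simp [← map_mul, he.anticomm a b h]

theorem commute_mul (he : IsCliffordFamily e) {a b c : ι} (hca : c ≠ a) (hcb : c ≠ b) :
    Commute (e c) (e a * e b) := by
  rw [Commute, SemiconjBy, ← mul_assoc, he.anticomm c a hca, neg_mul, mul_assoc,
    he.anticomm c b hcb, mul_neg, neg_neg, mul_assoc]

theorem commute_mul_mul (he : IsCliffordFamily e) {i j k l : ι}
    (hki : k ≠ i) (hkj : k ≠ j) (hli : l ≠ i) (hlj : l ≠ j) :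
    Commute (e k * e l) (e i * e j) :=
  (he.commute_mul hki hkj).mul_left (he.commute_mul hli hlj)

theorem mul_mul_mul_self (he : IsCliffordFamily e) (i j k : ι) :
    e i * e j * (e j * e k) = -(e i * e k) := by
  rw [mul_assoc, ← mul_assoc (e j), he.mul_self]; simp

theorem commutator_mul_mul_of_ne (he : IsCliffordFamily e) {i j k : ι} (hij : i ≠ j)
    (hik : i ≠ k) (hjk : j ≠ k) :
    e i * e j * (e j * e k) - e j * e k * (e i * e j) = -(2 • (e i * e k)) := by
  have hswap : e j * e k * (e i * e j) = e i * e k := calc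
    e j * e k * (e i * e j) = e j * (e k * e i) * e j := by simp only [mul_assoc]
    _ = e k * e i * (e j * e j) := by rw [(he.commute_mul hjk hij.symm).eq]; simp only [mul_assoc]
    _ = e i * e k := by rw [he.mul_self, mul_neg_one, he.anticomm k i hik.symm, neg_neg]
  rw [he.mul_mul_mul_self, hswap, two_nsmul, neg_add]
  abel

theorem mul_add_mul [DecidableEq ι] (he : IsCliffordFamily e) (a b : ι) :
    e a * e b + e b * e a = if a = b then -2 else 0 := by
  split_ifs with h
  · subst h; rw [he.mul_self, ← neg_add, one_add_one_eq_two]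
  · rw [he.anticomm a b h, neg_add_cancel]

theorem commutator_mul [DecidableEq ι] (he : IsCliffordFamily e) (a b m : ι) :
    e a * e b * e m - e m * (e a * e b)
      = (if a = m then 2 • e b else 0) - (if b = m then 2 • e a else 0) := by
  calc e a * e b * e m - e m * (e a * e b)
        = e a * (e b * e m + e m * e b) - (e a * e m + e m * e a) * e b := by noncomm_ring
    _ = _ := by
      rw [he.mul_add_mul, he.mul_add_mul]
      split_ifs <;>
        simp only [mul_neg, neg_mul, mul_two, two_mul, two_nsmul, mul_zero, zero_mul] <;> abel

theorem commutator_sum_smul_mul [Fintype ι] [DecidableEq ι] {K : Type*} [CommRing K] [Algebra K R]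
    (he : IsCliffordFamily e) (c : ι → ι → K) (m : ι) :
    (∑ a, ∑ b, c a b • (e a * e b)) * e m - e m * ∑ a, ∑ b, c a b • (e a * e b)
      = 2 • ∑ x, (c m x - c x m) • e x := by
  calc _ = ∑ a, ∑ b, c a b • (e a * e b * e m - e m * (e a * e b)) := by
        simp only [Finset.sum_mul, Finset.mul_sum, smul_mul_assoc, mul_smul_comm,
          ← Finset.sum_sub_distrib, smul_sub]
    _ = _ := by
        simp only [he.commutator_mul, smul_sub, smul_ite, smul_zero, Finset.sum_sub_distrib,
          Finset.sum_ite_irrel, Finset.sum_const_zero, Finset.sum_ite_eq', Finset.mem_univ,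
          if_true, sub_smul, Finset.smul_sum, smul_comm (2 : ℕ)]

theorem star_mul_of_ne [StarRing R] (he : IsCliffordFamily e) (hskew : ∀ a, star (e a) = -e a)
    {a b : ι} (h : a ≠ b) : star (e a * e b) = -(e a * e b) := by
  rw [star_mul, hskew, hskew, neg_mul_neg, he.anticomm b a h.symm]

end IsCliffordFamily

section Expectation

variable {H : Type*} [NormedAddCommGroup H] [InnerProductSpace ℂ H]

def reExpect (φ : H) : (H →L[ℂ] H) →+ ℝ where
  toFun U := (inner ℂ (U φ) φ).re
  map_zero' := by simp
  map_add' U V := by simp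

variable {φ : H}

theorem reExpect_apply (U : H →L[ℂ] H) : reExpect φ U = (inner ℂ (U φ) φ).re := rfl

theorem reExpect_ofReal_smul (c : ℝ) (U : H →L[ℂ] H) :
    reExpect φ ((c : ℂ) • U) = c * reExpect φ U := by
  simp [reExpect_apply]

theorem reExpect_mul_congr_right {U V V' : H →L[ℂ] H} (h : V φ = V' φ) :
    reExpect φ (U * V) = reExpect φ (U * V') := by
  simp [reExpect_apply, h]

theorem reExpect_mul_congr_left [CompleteSpace H] {M M' U : H →L[ℂ] H}
    (h : star M φ = star M' φ) :
    reExpect φ (M * U) = reExpect φ (M' * U) := by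
  simp only [reExpect_apply, mul_apply_eq_comp, ← ContinuousLinearMap.adjoint_inner_right,
    ← ContinuousLinearMap.star_eq_adjoint, h]

theorem sum_mul_reExpect_mul {κ : Type*} [Fintype κ] (c : κ → ℝ) (P : H →L[ℂ] H)
    (W : κ → H →L[ℂ] H) :
    ∑ m, c m * reExpect φ (P * W m) = reExpect φ (P * ∑ m, (c m : ℂ) • W m) := by
  simp only [Finset.mul_sum, mul_smul_comm, map_sum, reExpect_ofReal_smul]

end Expectation

section TwoForm

variable {H : Type*} [NormedAddCommGroup H] [InnerProductSpace ℂ H]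
variable {ι : Type*} [LinearOrder ι] (φ : H) (e : ι → H →L[ℂ] H)

def cliffordWedge (a b : ι) : H →L[ℂ] H := e a * e b + if a = b then 1 else 0

def twoForm (a b : ι) : (H →L[ℂ] H) →+ ℝ :=
  (reExpect φ).comp (AddMonoidHom.mulRight (cliffordWedge e a b))

def twoFormAction [Fintype ι] (P : H →L[ℂ] H) : H →L[ℂ] H :=
  ∑ a, ∑ b, if a < b then (twoForm φ e a b P : ℂ) • (e a * e b) else 0

def twoFormHat : (H →L[ℂ] H) →+ Matrix ι ι ℝ where
  toFun P := Matrix.of fun i j => twoForm φ e j i P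
  map_zero' := by ext; simp
  map_add' P Q := by ext; simp

variable {φ e}

theorem twoFormHat_apply (P : H →L[ℂ] H) (i j : ι) :
    twoFormHat φ e P i j = twoForm φ e j i P :=
  rfl

theorem twoForm_apply (a b : ι) (P : H →L[ℂ] H) :
    twoForm φ e a b P = reExpect φ (P * cliffordWedge e a b) :=
  rfl

theorem twoFormAction_neg [Fintype ι] (P : H →L[ℂ] H) :
    twoFormAction φ e (-P) = -twoFormAction φ e P := by
  simp only [twoFormAction, map_neg, Complex.ofReal_neg, neg_smul, ← Finset.sum_neg_distrib]
  refine Finset.sum_congr rfl fun a _ => Finset.sum_congr rfl fun b _ => ?_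
  split_ifs <;> simp

theorem cliffordWedge_swap (he : IsCliffordFamily e) (a b : ι) :
    cliffordWedge e b a = -cliffordWedge e a b := by
  unfold cliffordWedge
  by_cases h : a = b
  · subst h; simp [he.mul_self]
  · simp [he.anticomm a b h, h, Ne.symm h]

theorem twoForm_swap (he : IsCliffordFamily e) (a b : ι) (P : H →L[ℂ] H) :
    twoForm φ e b a P = -twoForm φ e a b P := by
  rw [twoForm_apply, twoForm_apply, cliffordWedge_swap he, mul_neg, map_neg]

theorem twoForm_self (he : IsCliffordFamily e) (a : ι) (P : H →L[ℂ] H) :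
    twoForm φ e a a P = 0 := by
  linarith [twoForm_swap (φ := φ) he a a P]

theorem commute_twoFormAction [Fintype ι] {Q : H →L[ℂ] H} (hQ : ∀ a, Commute Q (e a))
    (P : H →L[ℂ] H) :
    Commute Q (twoFormAction φ e P) := by
  refine Commute.sum_right _ _ _ fun a _ => Commute.sum_right _ _ _ fun b _ => ?_
  split_ifs
  · exact ((hQ a).mul_right (hQ b)).smul_right _
  · exact Commute.zero_right Q

theorem star_twoFormAction [Fintype ι] [CompleteSpace H] (he : IsCliffordFamily e)
    (hskew : ∀ a, star (e a) = -e a) (P : H →L[ℂ] H) :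
    star (twoFormAction φ e P) = -twoFormAction φ e P := by
  simp only [twoFormAction, star_sum, ← Finset.sum_neg_distrib]
  refine Finset.sum_congr rfl fun a _ => Finset.sum_congr rfl fun b _ => ?_
  split_ifs with hab
  · rw [star_smul, he.star_mul_of_ne hskew hab.ne, Complex.star_def, Complex.conj_ofReal, smul_neg]
  · simp

theorem commutator_twoFormAction [Fintype ι] (he : IsCliffordFamily e) (P : H →L[ℂ] H)
    (m : ι) :
    twoFormAction φ e P * e m - e m * twoFormAction φ e P
      = 2 • ∑ x, (twoForm φ e m x P : ℂ) • e x := by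
  have h :=
    he.commutator_sum_smul_mul (fun a b => if a < b then (twoForm φ e a b P : ℂ) else 0) m
  simp only [ite_smul, zero_smul] at h
  rw [twoFormAction, h]
  congr! 3 with x
  rcases lt_trichotomy m x with hmx | rfl | hxm
  · simp [hmx, hmx.not_gt]
  · simp [twoForm_self he]
  · simp [hxm, hxm.not_gt, twoForm_swap he x m]

theorem sum_smul_cliffordWedge_left [Fintype ι] (c : ι → ℂ) (a : ι) :
    ∑ m, c m • cliffordWedge e m a = (∑ m, c m • e m) * e a + c a • 1 := by
  simp only [cliffordWedge, smul_add, Finset.sum_add_distrib, Finset.sum_mul, smul_mul_assoc,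
    smul_ite, smul_zero, Finset.sum_ite_eq', Finset.mem_univ, if_true]

theorem sum_smul_cliffordWedge_right [Fintype ι] (c : ι → ℂ) (b : ι) :
    ∑ m, c m • cliffordWedge e b m = e b * (∑ m, c m • e m) + c b • 1 := by
  simp only [cliffordWedge, smul_add, Finset.sum_add_distrib, Finset.mul_sum, mul_smul_comm,
    smul_ite, smul_zero, Finset.sum_ite_eq, Finset.mem_univ, if_true]

theorem two_mul_twoFormHat_commutator_apply [Fintype ι] (he : IsCliffordFamily e)
    (P P' : H →L[ℂ] H) (a b : ι) :
    2 * (twoFormHat φ e P' * twoFormHat φ e P - twoFormHat φ e P * twoFormHat φ e P') a b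
      = reExpect φ
          (P' * (twoFormAction φ e P * (e b * e a) - e b * e a * twoFormAction φ e P)) := by
  set V : ι → H →L[ℂ] H := fun x => ∑ y, (twoForm φ e x y P : ℂ) • e y
  have h₁ : (twoFormHat φ e P' * twoFormHat φ e P) a b
      = reExpect φ (P' * (V b * e a + (twoForm φ e b a P : ℂ) • 1)) := by
    rw [← sum_smul_cliffordWedge_left, ← sum_mul_reExpect_mul]
    simp only [Matrix.mul_apply, twoFormHat_apply, twoForm_apply, mul_comm]
  have h₂ : (twoFormHat φ e P * twoFormHat φ e P') a b
      = reExpect φ (P' * (-(e b * V a) + (twoForm φ e b a P : ℂ) • 1)) := by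
    have hV : ∑ m, (twoForm φ e m a P : ℂ) • e m = -V a := by
      simp [V, twoForm_swap he _ a, ← Finset.sum_neg_distrib]
    rw [← mul_neg, ← hV, ← sum_smul_cliffordWedge_right, ← sum_mul_reExpect_mul]
    simp only [Matrix.mul_apply, twoFormHat_apply, twoForm_apply]
  have hΩ : twoFormAction φ e P * (e b * e a) - e b * e a * twoFormAction φ e P
      = 2 • (V b * e a + e b * V a) := by
    calc _ = (twoFormAction φ e P * e b - e b * twoFormAction φ e P) * e a
          + e b * (twoFormAction φ e P * e a - e a * twoFormAction φ e P) := by noncomm_ring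
      _ = _ := by
        rw [commutator_twoFormAction he, commutator_twoFormAction he, smul_mul_assoc, mul_smul_comm,
          smul_add]
  rw [Matrix.sub_apply, h₁, h₂, hΩ, mul_smul_comm, map_nsmul, nsmul_eq_mul, Nat.cast_ofNat,
    ← map_sub, ← mul_sub]
  congr 3
  abel

theorem reExpect_mul_commutator_twoFormAction [Fintype ι] [CompleteSpace H]
    (he : IsCliffordFamily e) (hskew : ∀ a, star (e a) = -e a) {P P' X : H →L[ℂ] H}
    (hP : star P = -P) (hP'e : ∀ a, Commute P' (e a)) (hPX : Commute P X)
    (hφ : twoFormAction φ e P φ = -(P φ)) :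
    reExpect φ (P' * (twoFormAction φ e P * X - X * twoFormAction φ e P))
      = reExpect φ ((P' * P - P * P') * X) := by
  -- `Ω_P φ = -P φ` trades `Ω_P` for `-P` on the right, and (both skew-adjoint) on the left.
  have h₁ : reExpect φ (twoFormAction φ e P * (P' * X)) = -reExpect φ (P * (P' * X)) := by
    rw [reExpect_mul_congr_left (M' := -P), neg_mul, map_neg]
    rw [star_twoFormAction he hskew, star_neg, hP, neg_neg, _root_.neg_apply, hφ, neg_neg]
  have h₂ : reExpect φ (P' * X * twoFormAction φ e P) = -reExpect φ (P' * P * X) := by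
    rw [reExpect_mul_congr_right (V' := -P) (hφ.trans (_root_.neg_apply P φ).symm), mul_neg,
      map_neg, mul_assoc, ← hPX.eq, mul_assoc]
  calc _ = reExpect φ (twoFormAction φ e P * (P' * X))
          - reExpect φ (P' * X * twoFormAction φ e P) := by
        rw [mul_sub, map_sub, ← mul_assoc, (commute_twoFormAction hP'e P).eq, mul_assoc,
          mul_assoc]
    _ = _ := by rw [h₁, h₂, sub_mul, map_sub, mul_assoc P]; ring

theorem twoFormHat_commutator [Fintype ι] [CompleteSpace H] (he : IsCliffordFamily e)
    (hskew : ∀ a, star (e a) = -e a) {P P' : H →L[ℂ] H} (hP : star P = -P)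
    (hPe : ∀ a, Commute P (e a)) (hP'e : ∀ a, Commute P' (e a))
    (hφ : twoFormAction φ e P φ = -(P φ)) :
    twoFormHat φ e P' * twoFormHat φ e P - twoFormHat φ e P * twoFormHat φ e P'
      = (2⁻¹ : ℝ) •
          (twoFormHat φ e (P' * P - P * P') - reExpect φ (P' * P - P * P') • 1) := by
  ext a b
  have h := two_mul_twoFormHat_commutator_apply (φ := φ) he P P' a b
  rw [reExpect_mul_commutator_twoFormAction he hskew hP hP'e ((hPe b).mul_right (hPe a)) hφ] at h
  simp only [Matrix.smul_apply, Matrix.sub_apply, twoFormHat_apply, twoForm_apply, cliffordWedge,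
    Matrix.one_apply, mul_add, map_add, smul_eq_mul] at h ⊢
  split_ifs with hba hab hab
  · simp only [mul_one]; linarith
  · exact absurd hba.symm hab
  · exact absurd hab.symm hba
  · simp only [mul_zero, map_zero]; linarith

end TwoForm

section SpinorRepresentation

variable {n : ℕ}

def pauli (i : ℕ) : Matrix (Fin 2) (Fin 2) ℂ := if i % 2 = 0 then g1M else g2M

theorem pauli_mul_self (i : ℕ) : pauli i * pauli i = -1 := by
  unfold pauli
  split_ifs <;> ext a b <;> fin_cases a <;> fin_cases b <;> simp [g1M, g2M, Matrix.mul_apply]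

theorem pauli_anticomm {i j : ℕ} (h : i % 2 ≠ j % 2) :
    pauli i * pauli j = -(pauli j * pauli i) := by
  unfold pauli
  split_ifs <;> first
    | omega
    | (ext a b; fin_cases a <;> fin_cases b <;> simp [g1M, g2M, Matrix.mul_apply])

theorem pauli_mul_TM (i : ℕ) : pauli i * TM = -(TM * pauli i) := by
  unfold pauli
  split_ifs <;> ext a b <;> fin_cases a <;> fin_cases b <;> simp [g1M, g2M, TM, Matrix.mul_apply]

theorem conjTranspose_pauli (i : ℕ) : (pauli i)ᴴ = -pauli i := by
  unfold pauli
  split_ifs <;> ext a b <;> fin_cases a <;> fin_cases b <;> simp [g1M, g2M]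

theorem TM_mul_self : TM * TM = 1 := by
  ext i j; fin_cases i <;> fin_cases j <;> simp [TM, Matrix.mul_apply]

theorem conjTranspose_TM : TMᴴ = TM := by
  ext i j; fin_cases i <;> fin_cases j <;> simp [TM]

theorem tensorOp_mul_tensorOp {k : ℕ} (M N : Fin k → Matrix (Fin 2) (Fin 2) ℂ) :
    tensorOp M * tensorOp N = tensorOp (M * N) := by
  ext x y
  simp only [tensorOp, Matrix.mul_apply, Matrix.of_apply, Pi.mul_apply, Finset.prod_univ_sum,
    ← Fintype.piFinset_univ, Finset.prod_mul_distrib]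

theorem tensorOp_one {k : ℕ} : tensorOp (1 : Fin k → Matrix (Fin 2) (Fin 2) ℂ) = 1 := by
  ext x y
  by_cases h : x = y
  · subst h; simp [tensorOp]
  · obtain ⟨t, ht⟩ := Function.ne_iff.mp h
    simp [tensorOp, Matrix.one_apply, h, Finset.prod_eq_zero (Finset.mem_univ t), ht]

theorem conjTranspose_tensorOp {k : ℕ} (M : Fin k → Matrix (Fin 2) (Fin 2) ℂ) :
    (tensorOp M)ᴴ = tensorOp (star M) := by
  ext x y
  simp [tensorOp, Matrix.conjTranspose_apply]

theorem tensorOp_eq_neg {k : ℕ} {M N : Fin k → Matrix (Fin 2) (Fin 2) ℂ} (s : Fin k)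
    (hs : N s = -M s) (ht : ∀ t, t ≠ s → N t = M t) : tensorOp N = -tensorOp M := by
  ext x y
  simp only [tensorOp, Matrix.of_apply, Matrix.neg_apply]
  rw [← Finset.mul_prod_erase _ _ (Finset.mem_univ s),
    ← Finset.mul_prod_erase _ _ (Finset.mem_univ s), hs,
    Finset.prod_congr rfl fun t ht' => by rw [ht t (Finset.ne_of_mem_erase ht')],
    Matrix.neg_apply, neg_mul]

theorem tensorOp_anticomm {k : ℕ} {M N : Fin k → Matrix (Fin 2) (Fin 2) ℂ} (s : Fin k)
    (hs : M s * N s = -(N s * M s)) (ht : ∀ t, t ≠ s → M t * N t = N t * M t) :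
    tensorOp M * tensorOp N = -(tensorOp N * tensorOp M) := by
  rw [tensorOp_mul_tensorOp, tensorOp_mul_tensorOp]
  exact tensorOp_eq_neg s hs ht

def genFactor (n i : ℕ) : Fin (n / 2) → Matrix (Fin 2) (Fin 2) ℂ := fun t =>
  if (t : ℕ) < n / 2 - 1 - i / 2 then 1
  else if (t : ℕ) = n / 2 - 1 - i / 2 then pauli i
  else TM

theorem genMat_of_lt {i : ℕ} (h : i < 2 * (n / 2)) : genMat n i = tensorOp (genFactor n i) := by
  rw [genMat, if_pos h]; rfl

theorem genMat_of_not_lt {i : ℕ} (h : ¬i < 2 * (n / 2)) :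
    genMat n i = I • tensorOp (fun _ => TM) := by
  rw [genMat, if_neg h]

theorem genFactor_of_lt {i : ℕ} {t : Fin (n / 2)} (h : (t : ℕ) < n / 2 - 1 - i / 2) :
    genFactor n i t = 1 := by
  simp [genFactor, h]

theorem genFactor_of_eq {i : ℕ} {t : Fin (n / 2)} (h : (t : ℕ) = n / 2 - 1 - i / 2) :
    genFactor n i t = pauli i := by
  simp [genFactor, h]

theorem genFactor_of_gt {i : ℕ} {t : Fin (n / 2)} (h : n / 2 - 1 - i / 2 < (t : ℕ)) :
    genFactor n i t = TM := by
  simp [genFactor, h.ne', h.not_gt]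

theorem genMat_mul_self (i : ℕ) : genMat n i * genMat n i = -1 := by
  by_cases h : i < 2 * (n / 2)
  · rw [genMat_of_lt h, tensorOp_mul_tensorOp,
      tensorOp_eq_neg (M := 1) ⟨n / 2 - 1 - i / 2, by omega⟩, tensorOp_one]
    · simp [genFactor_of_eq, pauli_mul_self]
    · intro t ht
      rcases (Fin.val_ne_of_ne ht).lt_or_gt with hlt | hgt
      · simp [genFactor_of_lt hlt]
      · simp [genFactor_of_gt hgt, TM_mul_self]
  · rw [genMat_of_not_lt h, smul_mul_smul_comm, I_mul_I, tensorOp_mul_tensorOp]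
    simp [Pi.mul_def, TM_mul_self, ← Pi.one_def, tensorOp_one]

theorem conjTranspose_genMat (i : ℕ) : (genMat n i)ᴴ = -genMat n i := by
  by_cases h : i < 2 * (n / 2)
  · rw [genMat_of_lt h, conjTranspose_tensorOp]
    refine tensorOp_eq_neg ⟨n / 2 - 1 - i / 2, by omega⟩ ?_ fun t ht => ?_
    · simp [genFactor_of_eq, Matrix.star_eq_conjTranspose, conjTranspose_pauli]
    · rcases (Fin.val_ne_of_ne ht).lt_or_gt with hlt | hgt
      · simp [genFactor_of_lt hlt]
      · simp [genFactor_of_gt hgt, Matrix.star_eq_conjTranspose, conjTranspose_TM]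
  · rw [genMat_of_not_lt h, conjTranspose_smul, conjTranspose_tensorOp]
    simp [Pi.star_def, Matrix.star_eq_conjTranspose, conjTranspose_TM]

theorem genMat_anticomm {i j : ℕ} (hij : i < j) (hi : i < 2 * (n / 2)) :
    genMat n i * genMat n j = -(genMat n j * genMat n i) := by
  set s : Fin (n / 2) := ⟨n / 2 - 1 - i / 2, by omega⟩
  have hcomm : ∀ N : Fin (n / 2) → Matrix (Fin 2) (Fin 2) ℂ, (∀ t, s < t → N t = TM) →
      ∀ t, t ≠ s → genFactor n i t * N t = N t * genFactor n i t := by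
    intro N hN t ht
    rcases (Fin.val_ne_of_ne ht).lt_or_gt with hlt | hgt
    · simp [genFactor_of_lt hlt]
    · rw [genFactor_of_gt hgt, hN t hgt]
  rw [genMat_of_lt hi]
  by_cases hj : j < 2 * (n / 2)
  · rw [genMat_of_lt hj]
    refine tensorOp_anticomm s ?_ (hcomm _ fun t hst => genFactor_of_gt ?_)
    · rw [genFactor_of_eq rfl]
      rcases (Nat.div_le_div_right (c := 2) hij.le).eq_or_lt with hij2 | hij2
      · rw [genFactor_of_eq (by simp [s, hij2])]
        exact pauli_anticomm (by omega)
      · rw [genFactor_of_gt (by simp [s]; omega)]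
        exact pauli_mul_TM i
    · have : n / 2 - 1 - i / 2 < (t : ℕ) := hst
      omega
  · rw [genMat_of_not_lt hj, mul_smul_comm, smul_mul_assoc, ← smul_neg]
    congr 1
    refine tensorOp_anticomm s ?_ (hcomm _ fun _ _ => rfl)
    rw [genFactor_of_eq rfl]
    exact pauli_mul_TM i


theorem isCliffordFamily_genMat (n : ℕ) : IsCliffordFamily fun a : Fin n => genMat n a where
  mul_self a := genMat_mul_self a
  anticomm a b h := by
    rcases (Fin.val_ne_of_ne h).lt_or_gt with hab | hba
    · exact genMat_anticomm hab (by omega)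
    · rw [genMat_anticomm hba (by omega), neg_neg]

end SpinorRepresentation

section TwistedSpinor

variable {r n : ℕ}

def actNHom (r n : ℕ) :
    Matrix (SpIdx n) (SpIdx n) ℂ →+* (TwSpinor r n →L[ℂ] TwSpinor r n) where
  toFun B := toEuclideanCLM (𝕜 := ℂ) ((1 : Matrix (SpIdx r) (SpIdx r) ℂ) ⊗ₖ B)
  map_one' := by simp
  map_mul' A B := by rw [← map_mul, ← mul_kronecker_mul, one_mul]
  map_zero' := by simp
  map_add' A B := by rw [kronecker_add, map_add]

def actRHom (r n : ℕ) :
    Matrix (SpIdx r) (SpIdx r) ℂ →+* (TwSpinor r n →L[ℂ] TwSpinor r n) where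
  toFun A := toEuclideanCLM (𝕜 := ℂ) (A ⊗ₖ (1 : Matrix (SpIdx n) (SpIdx n) ℂ))
  map_one' := by simp
  map_mul' A B := by rw [← map_mul, ← mul_kronecker_mul, one_mul]
  map_zero' := by simp
  map_add' A B := by rw [add_kronecker, map_add]

theorem actN_eq (B : Matrix (SpIdx n) (SpIdx n) ℂ) (φ : TwSpinor r n) :
    actN B φ = actNHom r n B φ := by
  ext p
  simp [actN, actNHom, Matrix.mulVec, dotProduct, Fintype.sum_prod_type, Matrix.one_apply]

theorem actR_eq (A : Matrix (SpIdx r) (SpIdx r) ℂ) (φ : TwSpinor r n) :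
    actR A φ = actRHom r n A φ := by
  ext p
  simp [actR, actRHom, Matrix.mulVec, dotProduct, Fintype.sum_prod_type, Matrix.one_apply]

theorem star_actNHom (B : Matrix (SpIdx n) (SpIdx n) ℂ) :
    star (actNHom r n B) = actNHom r n Bᴴ := by
  simp [actNHom, ← map_star, Matrix.star_eq_conjTranspose, conjTranspose_kronecker]

theorem star_actRHom (A : Matrix (SpIdx r) (SpIdx r) ℂ) :
    star (actRHom r n A) = actRHom r n Aᴴ := by
  simp [actRHom, ← map_star, Matrix.star_eq_conjTranspose, conjTranspose_kronecker]

theorem commute_actRHom_actNHom (A : Matrix (SpIdx r) (SpIdx r) ℂ)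
    (B : Matrix (SpIdx n) (SpIdx n) ℂ) :
    Commute (actRHom r n A) (actNHom r n B) := by
  simp only [Commute, SemiconjBy, actRHom, actNHom, RingHom.coe_mk, MonoidHom.coe_mk, OneHom.coe_mk,
    ← map_mul, ← mul_kronecker_mul, mul_one, one_mul]

def cliffordN (r n : ℕ) (a : Fin n) : TwSpinor r n →L[ℂ] TwSpinor r n :=
  actNHom r n (genMat n a)

def cliffordR (r n : ℕ) (k : Fin r) : TwSpinor r n →L[ℂ] TwSpinor r n :=
  actRHom r n (genMat r k)

theorem isCliffordFamily_cliffordN : IsCliffordFamily (cliffordN r n) :=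
  (isCliffordFamily_genMat n).map (actNHom r n)

theorem isCliffordFamily_cliffordR : IsCliffordFamily (cliffordR r n) :=
  (isCliffordFamily_genMat r).map (actRHom r n)

theorem star_cliffordN (a : Fin n) : star (cliffordN r n a) = -cliffordN r n a := by
  rw [cliffordN, star_actNHom, conjTranspose_genMat, map_neg]

theorem star_cliffordR (k : Fin r) : star (cliffordR r n k) = -cliffordR r n k := by
  rw [cliffordR, star_actRHom, conjTranspose_genMat, map_neg]

theorem commute_cliffordR_cliffordN (k : Fin r) (a : Fin n) :
    Commute (cliffordR r n k) (cliffordN r n a) :=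
  commute_actRHom_actNHom _ _

theorem vecMat_stdBasis (a : Fin n) : vecMat n (stdBasis n a) = genMat n a := by
  simp [vecMat, _root_.stdBasis, PiLp.single_apply]

theorem actNHom_wedgeMat_stdBasis (a b : Fin n) :
    actNHom r n (wedgeMat n (stdBasis n a) (stdBasis n b)) = cliffordWedge (cliffordN r n) a b := by
  rw [wedgeMat, vecMat_stdBasis, vecMat_stdBasis]
  simp only [_root_.stdBasis, EuclideanSpace.inner_single_left, PiLp.single_apply, cliffordWedge,
    cliffordN, map_add, map_mul]
  split_ifs <;> simp

theorem eta_stdBasis (φ : TwSpinor r n) (k l : Fin r) (a b : Fin n) :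
    eta r n φ k l (stdBasis n a) (stdBasis n b)
      = twoForm φ (cliffordN r n) a b (cliffordR r n k * cliffordR r n l) := by
  rw [_root_.eta, etaM, actR_eq, actN_eq, twoForm_apply, reExpect_apply, ← mul_apply_eq_comp,
    ← (commute_actRHom_actNHom _ _).eq, actNHom_wedgeMat_stdBasis, map_mul]
  rfl

theorem etaHatMat_eq (φ : TwSpinor r n) (k l : Fin r) :
    etaHatMat r n φ k l = twoFormHat φ (cliffordN r n) (cliffordR r n k * cliffordR r n l) := by
  ext i j
  exact eta_stdBasis φ k l j i

theorem etaActionM_eq (φ : TwSpinor r n) (k l : Fin r) :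
    etaActionM r n (genMat r k * genMat r l) φ
      = twoFormAction φ (cliffordN r n) (cliffordR r n k * cliffordR r n l) φ := by
  simp only [etaActionM, twoFormAction, _root_.sum_apply]
  refine Finset.sum_congr rfl fun a _ => Finset.sum_congr rfl fun b _ => ?_
  split_ifs
  · rw [actN_eq, ← eta_stdBasis, map_mul]
    rfl
  · rfl

theorem etaHatExt_eq (φ : TwSpinor r n) {k l : Fin r} (hkl : k ≠ l) :
    etaHatExt r n φ k l = twoFormHat φ (cliffordN r n) (cliffordR r n k * cliffordR r n l) := by
  rw [etaHatExt, if_neg hkl]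
  split_ifs
  · exact etaHatMat_eq φ k l
  · rw [etaHatMat_eq, isCliffordFamily_cliffordR.anticomm l k hkl.symm, map_neg, neg_neg]

end TwistedSpinor

namespace IsPartiallyPure

variable {r n : ℕ} {φ : TwSpinor r n} {V : Submodule ℝ (Rn n)}

theorem twoFormAction_apply (hpp : IsPartiallyPure r n φ V) {k l : Fin r} (hkl : k ≠ l) :
    twoFormAction φ (cliffordN r n) (cliffordR r n k * cliffordR r n l) φ
      = -((cliffordR r n k * cliffordR r n l) φ) := by
  have hlt : ∀ k l : Fin r, k < l →
      twoFormAction φ (cliffordN r n) (cliffordR r n k * cliffordR r n l) φ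
        = -((cliffordR r n k * cliffordR r n l) φ) := fun k l h => by
    have := hpp.eta_plus k l h
    rw [etaActionM_eq, actR_eq, map_mul] at this
    exact eq_neg_of_add_eq_zero_left this
  rcases hkl.lt_or_gt with h | h
  · exact hlt k l h
  · rw [isCliffordFamily_cliffordR.anticomm k l hkl, twoFormAction_neg, _root_.neg_apply,
      _root_.neg_apply, hlt l k h]

theorem reExpect_eq_zero (hpp : IsPartiallyPure r n φ V) {k l : Fin r} (hkl : k ≠ l) :
    reExpect φ (cliffordR r n k * cliffordR r n l) = 0 := by
  have hlt : ∀ k l : Fin r, k < l → reExpect φ (cliffordR r n k * cliffordR r n l) = 0 :=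
    fun k l h => by
      rw [reExpect_apply, cliffordR, cliffordR, ← map_mul, ← actR_eq, hpp.f_orth k l h, zero_re]
  rcases hkl.lt_or_gt with h | h
  · exact hlt k l h
  · rw [isCliffordFamily_cliffordR.anticomm k l hkl, map_neg, hlt l k h, neg_zero]

theorem etaHatExt_commutator (hpp : IsPartiallyPure r n φ V) {i j k l : Fin r} (hkl : k ≠ l)
    (hij : i ≠ j) :
    etaHatExt r n φ k l * etaHatExt r n φ i j - etaHatExt r n φ i j * etaHatExt r n φ k l
      = (2⁻¹ : ℝ) • (twoFormHat φ (cliffordN r n) (cliffordR r n k * cliffordR r n l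
            * (cliffordR r n i * cliffordR r n j) - cliffordR r n i * cliffordR r n j
            * (cliffordR r n k * cliffordR r n l))
          - reExpect φ (cliffordR r n k * cliffordR r n l * (cliffordR r n i * cliffordR r n j)
            - cliffordR r n i * cliffordR r n j * (cliffordR r n k * cliffordR r n l)) • 1) := by
  have hcomm : ∀ k l a, Commute (cliffordR r n k * cliffordR r n l) (cliffordN r n a) :=
    fun k l a => (commute_cliffordR_cliffordN k a).mul_left (commute_cliffordR_cliffordN l a)
  rw [etaHatExt_eq φ hkl, etaHatExt_eq φ hij]
  exact twoFormHat_commutator isCliffordFamily_cliffordN star_cliffordN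
    (isCliffordFamily_cliffordR.star_mul_of_ne star_cliffordR hij) (hcomm i j) (hcomm k l)
    (hpp.twoFormAction_apply hij)

end IsPartiallyPure

theorem stmt9_general (n r : ℕ) (φ : TwSpinor r n) (V : Submodule ℝ (Rn n))
    (hpp : IsPartiallyPure r n φ V) :
    (∀ i j k l : Fin r, i ≠ j → i ≠ k → i ≠ l → j ≠ k → j ≠ l → k ≠ l →
      etaHatExt r n φ k l * etaHatExt r n φ i j
          - etaHatExt r n φ i j * etaHatExt r n φ k l = 0) ∧
    (∀ i j k : Fin r, i ≠ j → i ≠ k → j ≠ k →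
      etaHatExt r n φ i j * etaHatExt r n φ j k
          - etaHatExt r n φ j k * etaHatExt r n φ i j = -(etaHatExt r n φ i k)) := by
  have hf := isCliffordFamily_cliffordR (r := r) (n := n)
  refine ⟨fun i j k l hij hik hil hjk hjl hkl => ?_, fun i j k hij hik hjk => ?_⟩
  · rw [hpp.etaHatExt_commutator hkl hij,
      (hf.commute_mul_mul hik.symm hjk.symm hil.symm hjl.symm).eq, sub_self]
    simp
  · rw [hpp.etaHatExt_commutator hij hjk, hf.commutator_mul_mul_of_ne hij hik hjk, map_neg,
      map_nsmul, map_neg, map_nsmul, hpp.reExpect_eq_zero hik, etaHatExt_eq φ hik, smul_zero,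
      neg_zero, zero_smul, sub_zero]
    module

/-- the endomorphisms η̂_{kl}^φ satisfy the commutation relations of so(r). -/
theorem stmt9 (n r : ℕ) (hr : 2 ≤ r) (φ : TwSpinor r n) (V : Submodule ℝ (Rn n))
    (hpp : IsPartiallyPure r n φ V) :
    (∀ i j k l : Fin r, i ≠ j → i ≠ k → i ≠ l → j ≠ k → j ≠ l → k ≠ l →
      etaHatExt r n φ k l * etaHatExt r n φ i j
          - etaHatExt r n φ i j * etaHatExt r n φ k l = 0) ∧
    (∀ i j k : Fin r, i ≠ j → i ≠ k → j ≠ k →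
      etaHatExt r n φ i j * etaHatExt r n φ j k
          - etaHatExt r n φ j k * etaHatExt r n φ i j = -(etaHatExt r n φ i k)) :=
  stmt9_general n r φ V hpp
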